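/- Let X have a suitable ordering, X_m an initial segment, and U biclosed in X_m. Then the closure Ū of U in X satisfies Ū ∩ X_m = U (and Ū is biclosed in X). -/

import Mathlib

open Set

variable {V : Type*} [AddCommGroup V] [Module ℝ V]

/-- The set of nonnegative linear combinations of elements of `A`. -/
def posSpan (A : Set V) : Set V :=
  {v | ∃ (s : Finset V) (c : V → ℝ),
    (↑s : Set V) ⊆ A ∧ (∀ x ∈ s, 0 ≤ c x) ∧ v = ∑ x ∈ s, c x • x}

/-- The nonnegative span of the pair `α, β`. -/
def cone2 (α β : V) : Set V := {v | ∃ a b : ℝ, 0 ≤ a ∧ 0 ≤ b ∧ v = a • α + b • β}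

/-- `B` is closed in `X`. -/
def IsClosedIn (X B : Set V) : Prop :=
  B ⊆ X ∧ ∀ α ∈ B, ∀ β ∈ B, ∀ γ ∈ X, γ ∈ cone2 α β → γ ∈ B

/-- `B` is coclosed in `X`. -/
def IsCoclosedIn (X B : Set V) : Prop := B ⊆ X ∧ IsClosedIn X (X \ B)

/-- `B` is biclosed in `X`. -/
def IsBiclosedIn (X B : Set V) : Prop := IsClosedIn X B ∧ IsClosedIn X (X \ B)

/-- `B` is convex in `X`. -/
def IsConvexIn (X B : Set V) : Prop := B ⊆ X ∧ posSpan B ∩ X = B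

/-- `B` is biconvex in `X`. -/
def IsBiconvexIn (X B : Set V) : Prop := IsConvexIn X B ∧ IsConvexIn X (X \ B)

/-- `B` is weakly separable in `X`. -/
def WeaklySeparableIn (X B : Set V) : Prop :=
  B ⊆ X ∧ posSpan B ∩ posSpan (X \ B) = {0}

/-- `B` is separable in `X`. -/
def SeparableIn (X B : Set V) : Prop :=
  B ⊆ X ∧ ∃ θ : Module.Dual ℝ V, (∀ α ∈ B, θ α < 0) ∧ (∀ α ∈ X \ B, 0 < θ α)

/-- `X` is clean: every biclosed subset is weakly separable. -/
def IsCleanIn (X : Set V) : Prop := ∀ B : Set V, IsBiclosedIn X B → WeaklySeparableIn X B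

/-- The closure of `U` in `X`: the smallest closed subset of `X` containing `U`. -/
def closureIn (X U : Set V) : Set V := ⋂₀ {C | U ⊆ C ∧ IsClosedIn X C}

/-- The interior of `K` in `X`. -/
def interiorIn (X K : Set V) : Set V := X \ closureIn X (X \ K)

/-- `F` is a full subset of `X`. -/
def IsFullIn (X F : Set V) : Prop :=
  F ⊆ X ∧ ∀ α ∈ F, ∀ β ∈ F, X ∩ (Submodule.span ℝ {α, β} : Set V) ⊆ F

variable {V : Type*} [AddCommGroup V] [Module ℝ V]

/-- `Y` is a linear subset of `X`: the intersection of `X` with a linear subspace. -/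
def IsLinearSubsetOf (X Y : Set V) : Prop := ∃ L : Submodule ℝ V, Y = X ∩ (L : Set V)

/-- `α` is a fundamental vector of `Y`. -/
def IsFundIn (Y : Set V) (α : V) : Prop := α ∈ Y ∧ α ∉ posSpan (Y \ {α})

/-- The index domain of an enumeration of length `N` (with `N = ⊤` for countably
infinite sets). -/
def domN (N : ℕ∞) : Set ℕ := {j | (j : ℕ∞) < N}

/-- The whole set `X` enumerated by `g`. -/
def wholeSet (N : ℕ∞) (g : ℕ → V) : Set V := g '' domN N

/-- The initial segment `Xᵢ = {γ₁, ..., γᵢ}` of the enumeration. -/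
def seg (N : ℕ∞) (g : ℕ → V) (i : ℕ) : Set V := g '' (domN N ∩ {j | j < i})

/-- The enumeration `g` (of length `N`) is a suitable ordering of
`X = wholeSet N g`: `g` is injective, `X` lies in an open half-space, every
2-dimensional linear subset of `X` has fundamental vectors which are ordered before
all other vectors of that subset, and every triple of vectors of an initial segment
`Xᵢ` lies in a full subset `F` of `X` with `F ∩ Xᵢ` clean. -/
def SuitableEnum (N : ℕ∞) (g : ℕ → V) : Prop :=
  Set.InjOn g (domN N) ∧
  (∃ θ : Module.Dual ℝ V, ∀ x ∈ wholeSet N g, 0 < θ x) ∧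
  (∀ Y : Set V, IsLinearSubsetOf (wholeSet N g) Y →
      Module.finrank ℝ (Submodule.span ℝ Y) = 2 →
      (∃ α β : V, IsFundIn Y α ∧ IsFundIn Y β ∧ Y ⊆ cone2 α β) ∧
      (∀ α β : V, IsFundIn Y α → β ∈ Y → ¬ IsFundIn Y β →
        ∀ a ∈ domN N, ∀ b ∈ domN N, g a = α → g b = β → a < b)) ∧
  (∀ i : ℕ, ∀ α ∈ seg N g i, ∀ β ∈ seg N g i, ∀ γ ∈ seg N g i,
      ∃ F : Set V, IsFullIn (wholeSet N g) F ∧ α ∈ F ∧ β ∈ F ∧ γ ∈ F ∧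
        IsCleanIn (F ∩ seg N g i))


/-!
Add the vectors of `X` one at a time in the suitable order and follow the closure of `U`. Let `γ`
be added to a segment `T` carrying a biclosed set `C`. If `γ` lies in the cone of two vectors of
`C`, then `insert γ C` is biclosed: a full subset through the vectors involved is clean on `T`, so
no nonzero vector lies both in the positive span of `C` and in that of its complement. Otherwise
`C` itself stays biclosed. Suppose `δ ∈ C` lay in the cone of `γ` and some `α ∈ T \ C`, and look
at the rank-two linear subset `Y` of `X` spanned by `α` and `γ`. If `γ` is fundamental in `Y`,
so is every vector of `Y` listed before it, `δ` among them, which is absurd. If not, both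
fundamental vectors of `Y` lie in `T`, and one of them, `e`, satisfies `γ ∈ cone(δ, e)` and
`δ ∈ cone(α, e)`, contradicting either the case assumption on `γ` (if `e ∈ C`) or the
biclosedness of `C`.
Either way the closure meets `T` in `C`, and the closure in `X` is the union of these compatible
stages, biclosed because biclosedness is tested on triples of vectors.
-/

section Cones

variable {V : Type*} [AddCommGroup V] [Module ℝ V]

lemma subset_posSpan (A : Set V) : A ⊆ posSpan A := fun x hx =>
  ⟨{x}, fun _ => 1, by simpa using hx, by simp, by simp⟩

lemma smul_mem_posSpan {A : Set V} {c : ℝ} {x : V} (hc : 0 ≤ c) (hx : x ∈ posSpan A) :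
    c • x ∈ posSpan A := by
  obtain ⟨s, d, hsA, hd, rfl⟩ := hx
  exact ⟨s, fun z => c * d z, hsA, fun z hz => mul_nonneg hc (hd z hz), by
    simp only [Finset.smul_sum, mul_smul]⟩

lemma add_mem_posSpan {A : Set V} {x y : V} (hx : x ∈ posSpan A) (hy : y ∈ posSpan A) :
    x + y ∈ posSpan A := by
  classical
  obtain ⟨s, c, hsA, hc, rfl⟩ := hx
  obtain ⟨t, d, htA, hd, rfl⟩ := hy
  refine ⟨s ∪ t, fun z => (if z ∈ s then c z else 0) + (if z ∈ t then d z else 0),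
    by simpa using And.intro hsA htA, fun z _ => ?_, ?_⟩
  · exact add_nonneg (by split_ifs with h; exacts [hc z h, le_rfl])
      (by split_ifs with h; exacts [hd z h, le_rfl])
  · simp only [add_smul, Finset.sum_add_distrib, ite_smul, zero_smul, Finset.sum_ite_mem,
      Finset.union_inter_cancel_left, Finset.union_inter_cancel_right]

lemma WeaklySeparableIn.eq_zero {Y B : Set V} (h : WeaklySeparableIn Y B) {v : V}
    (hB : v ∈ posSpan B) (hYB : v ∈ posSpan (Y \ B)) : v = 0 := by
  have hv : v ∈ posSpan B ∩ posSpan (Y \ B) := ⟨hB, hYB⟩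
  rwa [h.2] at hv

lemma left_mem_cone2 (α β : V) : α ∈ cone2 α β :=
  ⟨1, 0, zero_le_one, le_rfl, by simp⟩

lemma cone2_comm (α β : V) : cone2 α β = cone2 β α := by
  ext v
  exact ⟨fun ⟨a, b, ha, hb, hv⟩ => ⟨b, a, hb, ha, hv.trans (add_comm _ _)⟩,
    fun ⟨a, b, ha, hb, hv⟩ => ⟨b, a, hb, ha, hv.trans (add_comm _ _)⟩⟩

lemma cone2_subset_posSpan {A : Set V} {α β : V} (hα : α ∈ posSpan A) (hβ : β ∈ posSpan A) :
    cone2 α β ⊆ posSpan A := by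
  rintro _ ⟨a, b, ha, hb, rfl⟩
  exact add_mem_posSpan (smul_mem_posSpan ha hα) (smul_mem_posSpan hb hβ)

lemma cone2_subset_cone2 {α β u v : V} (hu : u ∈ cone2 α β) (hv : v ∈ cone2 α β) :
    cone2 u v ⊆ cone2 α β := by
  obtain ⟨a, b, ha, hb, rfl⟩ := hu
  obtain ⟨c, d, hc, hd, rfl⟩ := hv
  rintro _ ⟨s, t, hs, ht, rfl⟩
  exact ⟨s * a + t * c, s * b + t * d, by positivity, by positivity, by module⟩

lemma cone2_subset_span (α β : V) : cone2 α β ⊆ Submodule.span ℝ {α, β} := by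
  rintro _ ⟨a, b, -, -, rfl⟩
  exact Submodule.mem_span_pair.2 ⟨a, b, rfl⟩

lemma mem_cone2_self_comm {u w : V} (hw : w ∈ cone2 u u) (hw0 : w ≠ 0) : u ∈ cone2 w w := by
  obtain ⟨a, b, ha, hb, rfl⟩ := hw
  rw [← add_smul] at hw0 ⊢
  have hab : a + b ≠ 0 := fun h => hw0 (by rw [h, zero_smul])
  exact ⟨(a + b)⁻¹, 0, by positivity, le_rfl, by
    rw [zero_smul, add_zero, smul_smul, inv_mul_cancel₀ hab, one_smul]⟩

lemma mem_cone2_self_of_not_linearIndependent (θ : Module.Dual ℝ V) {u v : V}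
    (hu : 0 < θ u) (hv : 0 < θ v) (h : ¬ LinearIndependent ℝ ![u, v]) : v ∈ cone2 u u := by
  have hv0 : v ≠ 0 := by rintro rfl; simp at hv
  obtain ⟨t, ht⟩ : ∃ t : ℝ, t • v = u := by simpa [linearIndependent_fin2, hv0] using h
  have htpos : 0 < t := by
    rw [← ht, map_smul, smul_eq_mul] at hu
    exact pos_of_mul_pos_left hu hv.le
  exact ⟨t⁻¹, 0, by positivity, le_rfl, by
    rw [← ht, zero_smul, add_zero, smul_smul, inv_mul_cancel₀ htpos.ne', one_smul]⟩

lemma cone2_wedge_of_det_pos {e₁ e₂ α γ : V} {a₁ a₂ c₁ c₂ a b : ℝ}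
    (hα : α = a₁ • e₁ + a₂ • e₂) (hγ : γ = c₁ • e₁ + c₂ • e₂)
    (ha₂ : 0 ≤ a₂) (hc₁ : 0 ≤ c₁) (hc₂ : 0 ≤ c₂) (hD : 0 < a₁ * c₂ - a₂ * c₁)
    (ha : 0 < a) (hb : 0 ≤ b) :
    γ ∈ cone2 (a • α + b • γ) e₂ ∧ a • α + b • γ ∈ cone2 α e₂ := by
  have ha₁ : 0 < a₁ := by nlinarith [mul_nonneg ha₂ hc₁]
  have hd₁ : 0 < a * a₁ + b * c₁ := by nlinarith [mul_nonneg hb hc₁]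
  -- for `δ = a • α + b • γ` and `D = a₁ * c₂ - a₂ * c₁`, the coordinate determinants of the
  -- pairs `(δ, γ)` and `(α, δ)` are `a * D` and `b * D`
  refine ⟨⟨c₁ / (a * a₁ + b * c₁), a * (a₁ * c₂ - a₂ * c₁) / (a * a₁ + b * c₁),
    by positivity, by positivity, ?_⟩, ⟨(a * a₁ + b * c₁) / a₁, b * (a₁ * c₂ - a₂ * c₁) / a₁,
    by positivity, by positivity, ?_⟩⟩
  all_goals
    rw [hα, hγ]
    match_scalars
    all_goals field_simp
    all_goals ring

lemma exists_cone2_wedge {e₁ e₂ α γ : V} (hα : α ∈ cone2 e₁ e₂) (hγ : γ ∈ cone2 e₁ e₂)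
    (hind : LinearIndependent ℝ ![α, γ]) {a b : ℝ} (ha : 0 < a) (hb : 0 ≤ b) :
    ∃ e ∈ ({e₁, e₂} : Set V), γ ∈ cone2 (a • α + b • γ) e ∧ a • α + b • γ ∈ cone2 α e := by
  obtain ⟨a₁, a₂, ha₁, ha₂, rfl⟩ := hα
  obtain ⟨c₁, c₂, hc₁, hc₂, rfl⟩ := hγ
  have hD : a₁ * c₂ - a₂ * c₁ ≠ 0 := by
    intro hD
    rw [LinearIndependent.pair_iff] at hind
    have h₁ := hind c₁ (-a₁) (by linear_combination (norm := module) -hD • e₂)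
    have h₂ := hind c₂ (-a₂) (by linear_combination (norm := module) hD • e₁)
    rw [neg_eq_zero] at h₁ h₂
    obtain ⟨-, rfl⟩ := h₁
    obtain ⟨-, rfl⟩ := h₂
    simpa using hind 1 0 (by simp)
  rcases hD.lt_or_gt with hD | hD
  · exact ⟨e₁, by simp, cone2_wedge_of_det_pos (add_comm _ _) (add_comm _ _) ha₁ hc₂ hc₁
      (by linarith) ha hb⟩
  · exact ⟨e₂, by simp, cone2_wedge_of_det_pos rfl rfl ha₂ hc₁ hc₂ hD ha hb⟩

lemma finrank_span_inter_span_pair {X : Set V} {α γ : V} (hind : LinearIndependent ℝ ![α, γ])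
    (hα : α ∈ X) (hγ : γ ∈ X) :
    Module.finrank ℝ (Submodule.span ℝ (X ∩ (Submodule.span ℝ {α, γ} : Set V))) = 2 := by
  have hspan : Submodule.span ℝ (X ∩ (Submodule.span ℝ {α, γ} : Set V)) =
      Submodule.span ℝ (range ![α, γ]) := by
    rw [Matrix.range_cons, Matrix.range_cons, Matrix.range_empty, union_empty,
      singleton_union]
    refine le_antisymm (Submodule.span_le.2 inter_subset_right) (Submodule.span_mono ?_)
    exact insert_subset ⟨hα, Submodule.subset_span (by simp)⟩
      (singleton_subset_iff.2 ⟨hγ, Submodule.subset_span (by simp)⟩)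
  rw [hspan, finrank_span_eq_card hind, Fintype.card_fin]

lemma IsFullIn.mem_of_mem_cone2 {X F : Set V} (hF : IsFullIn X F) {α β v : V}
    (hα : α ∈ F) (hβ : β ∈ F) (hv : v ∈ X) (hvαβ : v ∈ cone2 α β) : v ∈ F :=
  hF.2 α hα β hβ ⟨hv, cone2_subset_span α β hvαβ⟩

end Cones

section Closure

variable {V : Type*} [AddCommGroup V] [Module ℝ V]

lemma subset_closureIn (X U : Set V) : U ⊆ closureIn X U := fun _ hx _ hC => hC.1 hx

lemma closureIn_subset {X U C : Set V} (hUC : U ⊆ C) (hC : IsClosedIn X C) :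
    closureIn X U ⊆ C :=
  sInter_subset_of_mem ⟨hUC, hC⟩

lemma isClosedIn_self (X : Set V) : IsClosedIn X X :=
  ⟨subset_rfl, fun _ _ _ _ _ hγ _ => hγ⟩

lemma isClosedIn_closureIn {X U : Set V} (hUX : U ⊆ X) : IsClosedIn X (closureIn X U) :=
  ⟨closureIn_subset hUX (isClosedIn_self X), fun _ hα _ hβ γ hγ hcone C hC =>
    hC.2.2 _ (hα C hC) _ (hβ C hC) γ hγ hcone⟩

lemma closureIn_eq_of_subset {X U C : Set V} (hUC : U ⊆ C) (hC : IsClosedIn X C)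
    (hCU : C ⊆ closureIn X U) : closureIn X U = C :=
  (closureIn_subset hUC hC).antisymm hCU

lemma IsClosedIn.closureIn_eq {X C : Set V} (hC : IsClosedIn X C) : closureIn X C = C :=
  closureIn_eq_of_subset subset_rfl hC (subset_closureIn X C)

lemma IsClosedIn.inter {X B Z : Set V} (hB : IsClosedIn X B) (hZ : Z ⊆ X) :
    IsClosedIn Z (B ∩ Z) :=
  ⟨inter_subset_right, fun _ hα _ hβ γ hγ hcone =>
    ⟨hB.2 _ hα.1 _ hβ.1 γ (hZ hγ) hcone, hγ⟩⟩

lemma IsBiclosedIn.inter {X B Z : Set V} (hB : IsBiclosedIn X B) (hZ : Z ⊆ X) :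
    IsBiclosedIn Z (B ∩ Z) := by
  refine ⟨hB.1.inter hZ, ?_⟩
  have hcompl : Z \ (B ∩ Z) = (X \ B) ∩ Z := by
    ext z
    exact ⟨fun ⟨hz, hzB⟩ => ⟨⟨hZ hz, fun h => hzB ⟨h, hz⟩⟩, hz⟩,
      fun ⟨⟨_, hzB⟩, hz⟩ => ⟨hz, fun h => hzB h.1⟩⟩
  rw [hcompl]
  exact hB.2.inter hZ

lemma closureIn_subset_closureIn {X Z U : Set V} (hZ : Z ⊆ X) (hU : U ⊆ Z) :
    closureIn Z U ⊆ closureIn X U :=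
  (closureIn_subset (subset_inter (subset_closureIn X U) hU)
    ((isClosedIn_closureIn (hU.trans hZ)).inter hZ)).trans inter_subset_left

lemma closureIn_closureIn {X Z U : Set V} (hZ : Z ⊆ X) (hU : U ⊆ Z) :
    closureIn X (closureIn Z U) = closureIn X U :=
  closureIn_eq_of_subset (closureIn_subset_closureIn hZ hU) (isClosedIn_closureIn (hU.trans hZ))
    (closureIn_subset ((subset_closureIn Z U).trans (subset_closureIn X _))
      (isClosedIn_closureIn ((isClosedIn_closureIn hU).1.trans hZ)))

lemma isClosedIn_of_forall_inter {X B : Set V} {T : ℕ → Set V} (hT : Monotone T)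
    (hXT : X ⊆ ⋃ k, T k) (hBX : B ⊆ X) (hB : ∀ k, IsClosedIn (T k) (B ∩ T k)) :
    IsClosedIn X B := by
  refine ⟨hBX, fun α hα β hβ γ hγ hcone => ?_⟩
  obtain ⟨i, hi⟩ := mem_iUnion.1 (hXT (hBX hα))
  obtain ⟨j, hj⟩ := mem_iUnion.1 (hXT (hBX hβ))
  obtain ⟨k, hk⟩ := mem_iUnion.1 (hXT hγ)
  have hl : ∀ {x}, x ∈ T i ∪ T j ∪ T k → x ∈ T (max i (max j k)) := by
    rintro x ((hx | hx) | hx)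
    exacts [hT (by omega) hx, hT (by omega) hx, hT (by omega) hx]
  exact ((hB _).2 α ⟨hα, hl (by simp [hi])⟩ β ⟨hβ, hl (by simp [hj])⟩ γ
    (hl (by simp [hk])) hcone).1

lemma isBiclosedIn_of_forall_inter {X B : Set V} {T : ℕ → Set V} (hT : Monotone T)
    (hTX : ∀ k, T k ⊆ X) (hXT : X ⊆ ⋃ k, T k) (hBX : B ⊆ X)
    (hB : ∀ k, IsBiclosedIn (T k) (B ∩ T k)) : IsBiclosedIn X B := by
  refine ⟨isClosedIn_of_forall_inter hT hXT hBX fun k => (hB k).1,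
    isClosedIn_of_forall_inter hT hXT sdiff_subset fun k => ?_⟩
  have hcompl : (X \ B) ∩ T k = T k \ (B ∩ T k) := by
    ext z
    exact ⟨fun ⟨⟨_, hzB⟩, hz⟩ => ⟨hz, fun h => hzB h.1⟩,
      fun ⟨hz, hzB⟩ => ⟨⟨hTX k hz, fun h => hzB ⟨h, hz⟩⟩, hz⟩⟩
  rw [hcompl]
  exact (hB k).2

end Closure

section Chains

variable {V : Type*}

lemma inter_eq_of_le {C T : ℕ → Set V} (hT : Monotone T) (hCT : ∀ k, C k ⊆ T k)
    (hCC : ∀ k, C (k + 1) ∩ T k = C k) {j k : ℕ} (hkj : k ≤ j) : C j ∩ T k = C k := by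
  induction j, hkj using Nat.le_induction with
  | base => exact inter_eq_left.2 (hCT k)
  | succ j hkj ih =>
    rw [← ih, ← hCC j, inter_assoc, inter_eq_right.2 (hT hkj)]

lemma iUnion_inter_eq {C T : ℕ → Set V} (hT : Monotone T) (hCT : ∀ k, C k ⊆ T k)
    (hCC : ∀ k, C (k + 1) ∩ T k = C k) (k : ℕ) : (⋃ j, C j) ∩ T k = C k := by
  refine subset_antisymm ?_ (subset_inter (subset_iUnion C k) (hCT k))
  rintro z ⟨hz, hzk⟩
  obtain ⟨j, hzj⟩ := mem_iUnion.1 hz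
  have hz' : z ∈ C (max j k) := by
    rw [← inter_eq_of_le hT hCT hCC (le_max_left j k)] at hzj
    exact hzj.1
  rw [← inter_eq_of_le hT hCT hCC (le_max_right j k)]
  exact ⟨hz', hzk⟩

end Chains

section Enumeration

variable {V : Type*} {N : ℕ∞} {g : ℕ → V}

lemma seg_mono : Monotone (seg N g) :=
  fun _ _ h => image_mono fun _ hj => ⟨hj.1, lt_of_lt_of_le hj.2 h⟩

lemma seg_subset_wholeSet (i : ℕ) : seg N g i ⊆ wholeSet N g :=
  image_mono inter_subset_left

lemma apply_mem_wholeSet {n : ℕ} (hn : n ∈ domN N) : g n ∈ wholeSet N g :=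
  mem_image_of_mem g hn

lemma exists_mem_seg {x : V} (hx : x ∈ wholeSet N g) : ∃ i, x ∈ seg N g i := by
  obtain ⟨j, hj, rfl⟩ := hx
  exact ⟨j + 1, j, ⟨hj, j.lt_succ_self⟩, rfl⟩

lemma seg_succ {n : ℕ} (hn : n ∈ domN N) : seg N g (n + 1) = insert (g n) (seg N g n) := by
  ext x
  simp only [seg, mem_image, mem_inter_iff, mem_ofPred_eq, mem_insert_iff, Nat.lt_succ_iff_lt_or_eq]
  grind

lemma seg_succ_of_notMem {n : ℕ} (hn : n ∉ domN N) : seg N g (n + 1) = seg N g n := by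
  ext x
  simp only [seg, mem_image, mem_inter_iff, mem_ofPred_eq, Nat.lt_succ_iff_lt_or_eq]
  grind

lemma apply_notMem_seg (hinj : InjOn g (domN N)) {n : ℕ} (hn : n ∈ domN N) :
    g n ∉ seg N g n := by
  rintro ⟨j, ⟨hj, hjn⟩, hgj⟩
  exact hjn.ne (hinj hj hn hgj)

end Enumeration

namespace SuitableEnum

variable {V : Type*} [AddCommGroup V] [Module ℝ V] {N : ℕ∞} {g : ℕ → V} {n : ℕ} {C : Set V}

lemma ne_zero (hs : SuitableEnum N g) {x : V} (hx : x ∈ wholeSet N g) : x ≠ 0 := by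
  obtain ⟨θ, hθ⟩ := hs.2.1
  rintro rfl
  simpa using hθ 0 hx

lemma exists_isFullIn_weaklySeparableIn (hs : SuitableEnum N g)
    (hC : IsBiclosedIn (seg N g n) C) {p q x : V} (hp : p ∈ seg N g n) (hq : q ∈ seg N g n)
    (hx : x ∈ seg N g n) :
    ∃ F, IsFullIn (wholeSet N g) F ∧ p ∈ F ∧ q ∈ F ∧ x ∈ F ∧
      WeaklySeparableIn (F ∩ seg N g n) (C ∩ (F ∩ seg N g n)) := by
  obtain ⟨F, hF, hpF, hqF, hxF, hclean⟩ := hs.2.2.2 n p hp q hq x hx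
  exact ⟨F, hF, hpF, hqF, hxF, hclean _ (hC.inter inter_subset_right)⟩

lemma isClosedIn_insert_of_mem_cone2 (hs : SuitableEnum N g) (hn : n ∈ domN N)
    (hC : IsBiclosedIn (seg N g n) C) {p q : V} (hp : p ∈ C) (hq : q ∈ C)
    (hγ : g n ∈ cone2 p q) :
    IsClosedIn (insert (g n) (seg N g n)) (insert (g n) C) := by
  have hCT := hC.1.1
  have mixed : ∀ x ∈ C, ∀ w ∈ seg N g n, w ∈ cone2 x (g n) → w ∈ C := by
    intro x hx w hw hwx
    by_contra hwC
    obtain ⟨F, hF, hpF, hqF, hxF, hsep⟩ :=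
      hs.exists_isFullIn_weaklySeparableIn hC (hCT hp) (hCT hq) (hCT hx)
    have hγF := hF.mem_of_mem_cone2 hpF hqF (apply_mem_wholeSet hn) hγ
    have hwF := hF.mem_of_mem_cone2 hxF hγF (seg_subset_wholeSet n hw) hwx
    have hspan : ∀ y ∈ C, y ∈ F → y ∈ posSpan (C ∩ (F ∩ seg N g n)) :=
      fun y hy hyF => subset_posSpan _ ⟨hy, hyF, hCT hy⟩
    refine hs.ne_zero (seg_subset_wholeSet n hw) (hsep.eq_zero ?_ ?_)
    · exact cone2_subset_posSpan (hspan x hx hxF)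
        (cone2_subset_posSpan (hspan p hp hpF) (hspan q hq hqF) hγ) hwx
    · exact subset_posSpan _ ⟨⟨hwF, hw⟩, fun h => hwC h.1⟩
  refine ⟨insert_subset_insert hCT, ?_⟩
  rintro x hx y hy w (rfl | hw) hwxy
  · exact mem_insert _ _
  refine mem_insert_of_mem _ ?_
  rcases hx with rfl | hx <;> rcases hy with rfl | hy
  · exact hC.1.2 p hp q hq w hw (cone2_subset_cone2 hγ hγ hwxy)
  · exact mixed y hy w hw (by rwa [cone2_comm])
  · exact mixed x hx w hw hwxy
  · exact hC.1.2 x hx y hy w hw hwxy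

lemma isClosedIn_diff_of_mem_cone2 (hs : SuitableEnum N g) (hn : n ∈ domN N)
    (hC : IsBiclosedIn (seg N g n) C) {p q : V} (hp : p ∈ C) (hq : q ∈ C)
    (hγ : g n ∈ cone2 p q) :
    IsClosedIn (insert (g n) (seg N g n)) (seg N g n \ C) := by
  refine ⟨sdiff_subset.trans (subset_insert _ _), ?_⟩
  rintro x hx y hy w (rfl | hw) hwxy
  swap
  · exact hC.2.2 x hx y hy w hw hwxy
  exfalso
  have hCT := hC.1.1
  obtain ⟨F, hF, hpF, hqF, hxF, hsep⟩ :=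
    hs.exists_isFullIn_weaklySeparableIn hC (hCT hp) (hCT hq) hx.1
  have hγF := hF.mem_of_mem_cone2 hpF hqF (apply_mem_wholeSet hn) hγ
  have hspan : ∀ y ∈ seg N g n \ C, y ∈ F →
      y ∈ posSpan ((F ∩ seg N g n) \ (C ∩ (F ∩ seg N g n))) :=
    fun y hy hyF => subset_posSpan _ ⟨⟨hyF, hy.1⟩, fun h => hy.2 h.1⟩
  have hγ' : g n ∈ posSpan ((F ∩ seg N g n) \ (C ∩ (F ∩ seg N g n))) := by
    obtain ⟨s, r, hs, hr, hγxy⟩ := hwxy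
    rcases hr.eq_or_lt with rfl | hr
    · exact cone2_subset_posSpan (hspan x hx hxF) (hspan x hx hxF)
        ⟨s, 0, hs, le_rfl, by simpa using hγxy⟩
    · have hyspan : y ∈ Submodule.span ℝ {x, g n} := Submodule.mem_span_pair.2
        ⟨-(s / r), r⁻¹, by rw [hγxy]; match_scalars <;> field_simp; ring⟩
      have hyF : y ∈ F := hF.2 x hxF _ hγF (mem_inter (seg_subset_wholeSet n hy.1) hyspan)
      exact cone2_subset_posSpan (hspan x hx hxF) (hspan y hy hyF) ⟨s, r, hs, hr.le, hγxy⟩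
  refine hs.ne_zero (apply_mem_wholeSet hn) (hsep.eq_zero ?_ hγ')
  exact cone2_subset_posSpan (subset_posSpan (C ∩ (F ∩ seg N g n)) ⟨hp, hpF, hCT hp⟩)
    (subset_posSpan (C ∩ (F ∩ seg N g n)) ⟨hq, hqF, hCT hq⟩) hγ

lemma isBiclosedIn_insert_of_mem_cone2 (hs : SuitableEnum N g) (hn : n ∈ domN N)
    (hC : IsBiclosedIn (seg N g n) C) {p q : V} (hp : p ∈ C) (hq : q ∈ C)
    (hγ : g n ∈ cone2 p q) :
    IsBiclosedIn (insert (g n) (seg N g n)) (insert (g n) C) := by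
  refine ⟨hs.isClosedIn_insert_of_mem_cone2 hn hC hp hq hγ, ?_⟩
  rw [insert_sdiff_of_mem _ (mem_insert _ _), sdiff_insert_of_notMem (apply_notMem_seg hs.1 hn)]
  exact hs.isClosedIn_diff_of_mem_cone2 hn hC hp hq hγ

lemma isFundIn_of_mem_seg (hs : SuitableEnum N g) (hn : n ∈ domN N) {Y : Set V}
    (hY : IsLinearSubsetOf (wholeSet N g) Y) (hrk : Module.finrank ℝ (Submodule.span ℝ Y) = 2)
    (hγ : IsFundIn Y (g n)) {δ : V} (hδY : δ ∈ Y) (hδ : δ ∈ seg N g n) : IsFundIn Y δ := by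
  obtain ⟨k, ⟨hk, hkn⟩, rfl⟩ := hδ
  by_contra h
  exact ((hs.2.2.1 Y hY hrk).2 _ _ hγ hδY h n hn k hk rfl rfl).not_gt hkn

lemma mem_seg_of_isFundIn (hs : SuitableEnum N g) (hn : n ∈ domN N) {Y : Set V}
    (hY : IsLinearSubsetOf (wholeSet N g) Y) (hrk : Module.finrank ℝ (Submodule.span ℝ Y) = 2)
    (hγY : g n ∈ Y) (hγ : ¬ IsFundIn Y (g n)) {ζ : V} (hζ : IsFundIn Y ζ) : ζ ∈ seg N g n := by
  obtain ⟨j, hj, rfl⟩ : ζ ∈ wholeSet N g := by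
    obtain ⟨L, rfl⟩ := hY
    exact hζ.1.1
  exact ⟨j, ⟨hj, (hs.2.2.1 Y hY hrk).2 _ _ hζ hγY hγ j hj n hn rfl rfl⟩, rfl⟩

lemma notMem_of_mem_cone2_apply (hs : SuitableEnum N g) (hn : n ∈ domN N)
    (hC : IsBiclosedIn (seg N g n) C) (hgen : ∀ x ∈ C, ∀ y ∈ C, g n ∉ cone2 x y)
    {α δ : V} (hα : α ∈ seg N g n) (hαC : α ∉ C) (hδ : δ ∈ seg N g n)
    (hδα : δ ∈ cone2 α (g n)) : δ ∉ C := by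
  intro hδC
  have hδ0 := hs.ne_zero (seg_subset_wholeSet n hδ)
  obtain ⟨θ, hθ⟩ := hs.2.1
  set X := wholeSet N g
  set γ := g n
  have hαX : α ∈ X := seg_subset_wholeSet n hα
  have hγX : γ ∈ X := apply_mem_wholeSet hn
  by_cases hind : LinearIndependent ℝ ![α, γ]
  swap
  · have hγα := mem_cone2_self_of_not_linearIndependent θ (hθ α hαX) (hθ γ hγX) hind
    have hδα' := cone2_subset_cone2 (left_mem_cone2 α α) hγα hδα
    exact hαC (hC.1.2 δ hδC δ hδC α hα (mem_cone2_self_comm hδα' hδ0))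
  obtain ⟨a, b, ha, hb, hδab⟩ := hδα
  rcases ha.eq_or_lt with rfl | ha
  · have hδγ : δ ∈ cone2 γ γ := ⟨0, b, le_rfl, hb, by simpa using hδab⟩
    exact hgen δ hδC δ hδC (mem_cone2_self_comm hδγ hδ0)
  set Y := X ∩ (Submodule.span ℝ {α, γ} : Set V)
  have hαY : α ∈ Y := ⟨hαX, Submodule.subset_span (by simp)⟩
  have hγY : γ ∈ Y := ⟨hγX, Submodule.subset_span (by simp)⟩
  have hδY : δ ∈ Y := ⟨seg_subset_wholeSet n hδ, by
    rw [hδab]; exact Submodule.mem_span_pair.2 ⟨a, b, rfl⟩⟩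
  have hY : IsLinearSubsetOf X Y := ⟨_, rfl⟩
  have hrk := finrank_span_inter_span_pair hind hαX hγX
  by_cases hγfund : IsFundIn Y γ
  · have hαδ : α ≠ δ := by rintro rfl; exact hαC hδC
    have hγδ : γ ≠ δ := by rintro rfl; exact apply_notMem_seg hs.1 hn hδ
    exact (hs.isFundIn_of_mem_seg hn hY hrk hγfund hδY hδ).2
      (cone2_subset_posSpan (subset_posSpan (Y \ {δ}) ⟨hαY, hαδ⟩)
        (subset_posSpan (Y \ {δ}) ⟨hγY, hγδ⟩) ⟨a, b, ha.le, hb, hδab⟩)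
  obtain ⟨α₀, β₀, hα₀, hβ₀, hYcone⟩ := (hs.2.2.1 Y hY hrk).1
  obtain ⟨e, he, hγe, hδe⟩ := exists_cone2_wedge (hYcone hαY) (hYcone hγY) hind ha hb
  rw [← hδab] at hγe hδe
  have heT : e ∈ seg N g n := by
    rcases he with rfl | rfl
    exacts [hs.mem_seg_of_isFundIn hn hY hrk hγY hγfund hα₀,
      hs.mem_seg_of_isFundIn hn hY hrk hγY hγfund hβ₀]
  by_cases heC : e ∈ C
  · exact hgen δ hδC e heC hγe
  · exact (hC.2.2 α ⟨hα, hαC⟩ e ⟨heT, heC⟩ δ hδ hδe).2 hδC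

lemma isBiclosedIn_of_forall_notMem_cone2 (hs : SuitableEnum N g) (hn : n ∈ domN N)
    (hC : IsBiclosedIn (seg N g n) C) (hgen : ∀ x ∈ C, ∀ y ∈ C, g n ∉ cone2 x y) :
    IsBiclosedIn (insert (g n) (seg N g n)) C := by
  have hγC : g n ∉ C := fun h => apply_notMem_seg hs.1 hn (hC.1.1 h)
  refine ⟨⟨hC.1.1.trans (subset_insert _ _), ?_⟩, ?_⟩
  · rintro x hx y hy w (rfl | hw) hwxy
    exacts [absurd hwxy (hgen x hx y hy), hC.1.2 x hx y hy w hw hwxy]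
  rw [insert_sdiff_of_notMem _ hγC]
  refine ⟨insert_subset_insert sdiff_subset, ?_⟩
  rintro x hx y hy w (rfl | hw) hwxy
  · exact mem_insert _ _
  refine mem_insert_of_mem _ ⟨hw, fun hwC => ?_⟩
  rcases hx with rfl | hx <;> rcases hy with rfl | hy
  · exact hgen w hwC w hwC (mem_cone2_self_comm hwxy (hs.ne_zero (seg_subset_wholeSet n hw)))
  · exact hs.notMem_of_mem_cone2_apply hn hC hgen hy.1 hy.2 hw (by rwa [cone2_comm]) hwC
  · exact hs.notMem_of_mem_cone2_apply hn hC hgen hx.1 hx.2 hw hwxy hwC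
  · exact (hC.2.2 x hx y hy w hw hwxy).2 hwC

theorem isBiclosedIn_closureIn_seg_succ (hs : SuitableEnum N g)
    (hC : IsBiclosedIn (seg N g n) C) :
    IsBiclosedIn (seg N g (n + 1)) (closureIn (seg N g (n + 1)) C) ∧
      closureIn (seg N g (n + 1)) C ∩ seg N g n = C := by
  by_cases hn : n ∈ domN N
  swap
  · rw [seg_succ_of_notMem hn, hC.1.closureIn_eq]
    exact ⟨hC, inter_eq_left.2 hC.1.1⟩
  rw [seg_succ hn]
  by_cases hgen : ∃ p ∈ C, ∃ q ∈ C, g n ∈ cone2 p q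
  · obtain ⟨p, hp, q, hq, hγ⟩ := hgen
    have hD := hs.isBiclosedIn_insert_of_mem_cone2 hn hC hp hq hγ
    have hCT' : C ⊆ insert (g n) (seg N g n) := hC.1.1.trans (subset_insert _ _)
    have hγcl : g n ∈ closureIn (insert (g n) (seg N g n)) C :=
      (isClosedIn_closureIn hCT').2 p (subset_closureIn _ _ hp) q (subset_closureIn _ _ hq) _
        (mem_insert _ _) hγ
    rw [closureIn_eq_of_subset (subset_insert _ _) hD.1
      (insert_subset hγcl (subset_closureIn _ _)),
      insert_inter_of_notMem (apply_notMem_seg hs.1 hn), inter_eq_left.2 hC.1.1]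
    exact ⟨hD, rfl⟩
  · push Not at hgen
    have hD := hs.isBiclosedIn_of_forall_notMem_cone2 hn hC hgen
    rw [hD.1.closureIn_eq, inter_eq_left.2 hC.1.1]
    exact ⟨hD, rfl⟩

end SuitableEnum

/-- If `X` has a suitable ordering, `Xₘ` is an initial segment, and `U`
is biclosed in `Xₘ`, then the closure `Ū` of `U` in `X` is biclosed in `X` and
satisfies `Ū ∩ Xₘ = U`. -/
theorem closure_of_biclosed_restricts
    (N : ℕ∞) (g : ℕ → V) (hs : SuitableEnum N g)
    (m : ℕ) (U : Set V) (hU : IsBiclosedIn (seg N g m) U) :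
    IsBiclosedIn (wholeSet N g) (closureIn (wholeSet N g) U) ∧
    closureIn (wholeSet N g) U ∩ seg N g m = U := by
  set T : ℕ → Set V := fun k => seg N g (m + k)
  have hT : Monotone T := fun _ _ h => seg_mono (by omega)
  have hTX : ∀ k, T k ⊆ wholeSet N g := fun k => seg_subset_wholeSet _
  have hXT : wholeSet N g ⊆ ⋃ k, T k := fun x hx => by
    obtain ⟨i, hi⟩ := exists_mem_seg hx
    exact mem_iUnion.2 ⟨i, seg_mono (by omega) hi⟩
  have hUT : ∀ k, U ⊆ T k := fun k => hU.1.1.trans (hT k.zero_le)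
  set Cl : ℕ → Set V := fun k => closureIn (T k) U
  have hstep : ∀ k, IsBiclosedIn (T k) (Cl k) →
      IsBiclosedIn (T (k + 1)) (Cl (k + 1)) ∧ Cl (k + 1) ∩ T k = Cl k := fun k h => by
    simp only [Cl, ← closureIn_closureIn (hT k.le_succ) (hUT k)]
    exact hs.isBiclosedIn_closureIn_seg_succ h
  have hCl : ∀ k, IsBiclosedIn (T k) (Cl k) :=
    Nat.rec (by simpa [Cl, T, hU.1.closureIn_eq] using hU) fun k h => (hstep k h).1
  have hCT : ∀ k, Cl k ⊆ T k := fun k => (hCl k).1.1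
  have hinter := iUnion_inter_eq hT hCT fun k => (hstep k (hCl k)).2
  have hW : IsBiclosedIn (wholeSet N g) (⋃ k, Cl k) :=
    isBiclosedIn_of_forall_inter hT hTX hXT (iUnion_subset fun k => (hCT k).trans (hTX k))
      fun k => by rw [hinter]; exact hCl k
  have hUW : U ⊆ ⋃ k, Cl k := (subset_closureIn _ U).trans (subset_iUnion Cl 0)
  rw [closureIn_eq_of_subset hUW hW.1
    (iUnion_subset fun k => closureIn_subset_closureIn (hTX k) (hUT k))]
  refine ⟨hW, ?_⟩
  simpa [T, Cl, hU.1.closureIn_eq] using hinter 0
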